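/- (Bellman difference bound) For γ < 0 and f, g ∈ C_ω(ℝ^k), x, y ∈ ℝ^k, β > 0: T_γf(x) − T_γg(x) − (T_γf(y) − T_γg(y)) ≤ ∫ (f(z)−g(z)) H^{f,g}_{x,y}(dz) ≤ ‖f−g‖_{β,ω-span} · ‖H^{f,g}_{x,y}‖_{β,ω-var}, where H^{f,g}_{x,y} is the difference of two Esscher-transformed transition measures. -/

import Mathlib

open MeasureTheory ProbabilityTheory Real Set

/-- The Bellman operator T_γ f(x) = inf_{h ∈ U} log E[exp(γF(x,h,W₀) + f(G(x,W₀)))]. -/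
noncomputable def bellmanT {Ω : Type*} [MeasureSpace Ω] {k m d : ℕ}
    (γ : ℝ) (U : Set (Fin m → ℝ)) (W₀ : Ω → Fin d → ℝ)
    (G : (Fin k → ℝ) → (Fin d → ℝ) → Fin k → ℝ)
    (F : (Fin k → ℝ) → (Fin m → ℝ) → (Fin d → ℝ) → ℝ)
    (f : (Fin k → ℝ) → ℝ) (x : Fin k → ℝ) : ℝ :=
  sInf ((fun h => Real.log
    (∫ ω', Real.exp (γ * F x h (W₀ ω') + f (G x (W₀ ω'))))) '' U)

/-- β-weighted ω-span seminorm. -/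
noncomputable def wspanb {k : ℕ} (β : ℝ) (ω f : (Fin k → ℝ) → ℝ) : ℝ :=
  ⨆ p : (Fin k → ℝ) × (Fin k → ℝ),
    (f p.1 - f p.2) / (2 + β * ω p.1 + β * ω p.2)


/-!
At the point `x`, the control `h_{(x,g)}` that is optimal for `g` is admissible for `f`, so
`T_γ f(x) - T_γ g(x) ≤ log E[e^{ψ_f}] - log E[e^{ψ_g}]`, where `ψ_f, ψ_g` are the two exponents at
this control. Since `ψ_g = ψ_f + (g - f) ∘ G(x, ·)`, the right side is `-log ∫ e^{g - f} dQ̄₁`, and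
Jensen's inequality under the Esscher measure `Q̄₁` bounds it by `∫ (f - g) dQ̄₁`. The same argument
at `y`, with the roles of `f` and `g` exchanged, gives the other half of the first inequality.

For the second, the definition of the span seminorm `s` provides a constant `c` with
`|f - g - c| ≤ s (1 + β ω)`. As `H = Q̄₁ - Q̄₂` has total mass zero,
`∫ (f - g) dH = ∫ (f - g - c) dH ≤ s ∫ (1 + β ω) d|H|`.
-/

section Gibbs

variable {α β : Type*} [MeasurableSpace α] [MeasurableSpace β] {μ : Measure α}

theorem integral_le_log_integral_exp [IsProbabilityMeasure μ] {ψ : α → ℝ}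
    (hψ : Integrable ψ μ) (hexp : Integrable (fun a => exp (ψ a)) μ) :
    ∫ a, ψ a ∂μ ≤ log (∫ a, exp (ψ a) ∂μ) := by
  rw [← exp_le_exp, exp_log (integral_exp_pos hexp)]
  exact convexOn_exp.map_integral_le continuous_exp.continuousOn isClosed_univ
    (.of_forall fun _ => mem_univ _) hψ hexp

theorem integral_tilted_le_log_integral_exp_add_sub [IsProbabilityMeasure μ] {ψ χ : α → ℝ}
    (hψ : Integrable (fun a => exp (ψ a)) μ) (hψχ : Integrable (fun a => exp (ψ a + χ a)) μ)
    (hχ : Integrable χ (μ.tilted ψ)) :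
    ∫ a, χ a ∂(μ.tilted ψ) ≤ log (∫ a, exp (ψ a + χ a) ∂μ) - log (∫ a, exp (ψ a) ∂μ) := by
  have := isProbabilityMeasure_tilted hψ
  have hexpχ : Integrable (fun a => exp (χ a)) (μ.tilted ψ) := by
    rw [integrable_tilted_iff hψ]
    simpa only [smul_eq_mul, ← exp_add] using hψχ
  have hmean : ∫ a, exp (χ a) ∂(μ.tilted ψ) =
      (∫ a, exp (ψ a + χ a) ∂μ) / ∫ a, exp (ψ a) ∂μ :=
    integral_exp_tilted ψ χ
  rw [← log_div (integral_exp_pos hψχ).ne' (integral_exp_pos hψ).ne', ← hmean]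
  exact integral_le_log_integral_exp hχ hexpχ

theorem eq_map_tilted_of_toReal_apply {T : α → β} (hT : Measurable T) (ψ : α → ℝ)
    {Q : Measure β} [IsFiniteMeasure Q]
    (hQ : ∀ A : Set β, MeasurableSet A → (Q A).toReal =
      (∫ a, A.indicator (fun _ => exp (ψ a)) (T a) ∂μ) / ∫ a, exp (ψ a) ∂μ) :
    Q = (μ.tilted ψ).map T := by
  refine Measure.ext fun A hA => ?_
  have hpre : (fun a => A.indicator (fun _ => exp (ψ a)) (T a)) =
      (T ⁻¹' A).indicator fun a => exp (ψ a) := by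
    ext a
    by_cases h : T a ∈ A <;> simp [h]
  rw [Measure.map_apply hT hA, tilted_apply_eq_ofReal_integral' ψ (hT hA),
    ← ENNReal.ofReal_toReal (measure_ne_top Q A), hQ A hA, hpre, integral_indicator (hT hA),
    ← integral_div]

end Gibbs

section TotalVariation

theorem exists_abs_sub_le_of_sub_le_add {X : Type*} [Nonempty X] {φ σ : X → ℝ}
    (h : ∀ z₁ z₂, φ z₁ - φ z₂ ≤ σ z₁ + σ z₂) : ∃ c, ∀ z, |φ z - c| ≤ σ z := by
  obtain ⟨z₀⟩ := ‹Nonempty X›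
  have hbdd : BddAbove (range fun z => φ z - σ z) :=
    ⟨φ z₀ + σ z₀, by rintro _ ⟨z, rfl⟩; linarith [h z z₀]⟩
  refine ⟨⨆ z, φ z - σ z, fun z => abs_le.2 ⟨?_, ?_⟩⟩
  · have := ciSup_le fun z' => show φ z' - σ z' ≤ φ z + σ z by linarith [h z' z]
    linarith
  · linarith [le_ciSup hbdd z]

variable {X : Type*} [MeasurableSpace X]

theorem MeasureTheory.Measure.add_sub_eq_add_sub (μ ν : Measure X) [IsFiniteMeasure μ]
    [IsFiniteMeasure ν] :
    μ + (ν - μ) = ν + (μ - ν) := by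
  have h := Measure.sub_toSignedMeasure_eq_toSignedMeasure_sub (μ := μ) (ν := ν)
  rw [sub_eq_sub_iff_add_eq_add] at h
  rw [← Measure.toSignedMeasure_eq_toSignedMeasure_iff, Measure.toSignedMeasure_add,
    Measure.toSignedMeasure_add, h, add_comm]

theorem MeasureTheory.Measure.totalVariation_toSignedMeasure_sub (μ ν : Measure X)
    [IsFiniteMeasure μ] [IsFiniteMeasure ν] :
    (μ.toSignedMeasure - ν.toSignedMeasure).totalVariation = (μ - ν) + (ν - μ) := by
  rw [SignedMeasure.totalVariation, Measure.toJordanDecomposition_toSignedMeasure_sub]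
  rfl

theorem integral_sub_integral_le_integral_totalVariation {μ ν : Measure X}
    [IsProbabilityMeasure μ] [IsProbabilityMeasure ν] {φ σ : X → ℝ} {c : ℝ}
    (hφσ : ∀ z, |φ z - c| ≤ σ z) (hμ : Integrable φ μ) (hν : Integrable φ ν)
    (hσ : Integrable σ (μ.toSignedMeasure - ν.toSignedMeasure).totalVariation) :
    ∫ z, φ z ∂μ - ∫ z, φ z ∂ν ≤
      ∫ z, σ z ∂(μ.toSignedMeasure - ν.toSignedMeasure).totalVariation := by
  rw [Measure.totalVariation_toSignedMeasure_sub] at hσ ⊢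
  obtain ⟨hσp, hσn⟩ := integrable_add_measure.1 hσ
  have hμc : Integrable (fun z => φ z - c) μ := hμ.sub (integrable_const c)
  have hνc : Integrable (fun z => φ z - c) ν := hν.sub (integrable_const c)
  have hpc := hμc.mono_measure (Measure.sub_le : μ - ν ≤ μ)
  have hnc := hνc.mono_measure (Measure.sub_le : ν - μ ≤ ν)
  have hbalance : ∫ z, (φ z - c) ∂μ + ∫ z, (φ z - c) ∂(ν - μ) =
      ∫ z, (φ z - c) ∂ν + ∫ z, (φ z - c) ∂(μ - ν) := by
    rw [← integral_add_measure hμc hnc, ← integral_add_measure hνc hpc,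
      Measure.add_sub_eq_add_sub]
  have hpos : ∫ z, (φ z - c) ∂(μ - ν) ≤ ∫ z, σ z ∂(μ - ν) :=
    integral_mono hpc hσp fun z => (le_abs_self _).trans (hφσ z)
  have hneg : ∫ z, -(φ z - c) ∂(ν - μ) ≤ ∫ z, σ z ∂(ν - μ) :=
    integral_mono hnc.neg hσn fun z => (neg_le_abs _).trans (hφσ z)
  rw [integral_neg] at hneg
  rw [integral_sub hμ (integrable_const c), integral_sub hν (integrable_const c)] at hbalance
  rw [integral_add_measure hσp hσn]
  -- `c` drops out because `μ` and `ν` have the same mass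
  simp only [integral_const, probReal_univ, one_smul] at hbalance
  linarith

end TotalVariation

section WeightedSpan

theorem exists_nonneg_abs_le_mul_one_add {X : Type*} {ω φ : X → ℝ} (hω : ∀ x, 0 ≤ ω x)
    (h : BddAbove (range fun x => |φ x| / (1 + ω x))) :
    ∃ C, 0 ≤ C ∧ ∀ x, |φ x| ≤ C * (1 + ω x) := by
  obtain ⟨C, hC⟩ := h
  refine ⟨max C 0, le_max_right _ _, fun x => ?_⟩
  have hpos : 0 < 1 + ω x := by linarith [hω x]
  calc |φ x| ≤ C * (1 + ω x) := (div_le_iff₀ hpos).1 (hC ⟨x, rfl⟩)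
    _ ≤ max C 0 * (1 + ω x) := by gcongr; exact le_max_left _ _

theorem bddAbove_range_weighted_span_quotient {X : Type*} {β C : ℝ} {ω φ : X → ℝ} (hβ : 0 < β)
    (hω : ∀ x, 0 ≤ ω x) (hC : 0 ≤ C) (hφ : ∀ x, |φ x| ≤ C * (1 + ω x)) :
    BddAbove (range fun p : X × X => (φ p.1 - φ p.2) / (2 + β * ω p.1 + β * ω p.2)) := by
  refine ⟨C * (1 + β⁻¹), ?_⟩
  rintro _ ⟨⟨z₁, z₂⟩, rfl⟩
  have h₁ := mul_nonneg hβ.le (hω z₁)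
  have h₂ := mul_nonneg hβ.le (hω z₂)
  rw [div_le_iff₀ (by linarith)]
  have hexpand : C * (1 + β⁻¹) * (2 + β * ω z₁ + β * ω z₂) =
      C * (1 + ω z₁) + C * (1 + ω z₂) + C * (β * ω z₁ + β * ω z₂ + 2 * β⁻¹) := by
    field_simp
    ring
  have hrest : 0 ≤ C * (β * ω z₁ + β * ω z₂ + 2 * β⁻¹) := by positivity
  linarith [le_abs_self (φ z₁), neg_abs_le (φ z₂), hφ z₁, hφ z₂]

theorem sub_le_wspanb_mul {k : ℕ} {β : ℝ} {ω φ : (Fin k → ℝ) → ℝ} (hβ : 0 ≤ β)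
    (hω : ∀ x, 0 ≤ ω x)
    (hbdd : BddAbove (range fun p : (Fin k → ℝ) × (Fin k → ℝ) =>
      (φ p.1 - φ p.2) / (2 + β * ω p.1 + β * ω p.2)))
    (z₁ z₂ : Fin k → ℝ) :
    φ z₁ - φ z₂ ≤ wspanb β ω φ * (2 + β * ω z₁ + β * ω z₂) := by
  have hden : 0 < 2 + β * ω z₁ + β * ω z₂ := by
    nlinarith [mul_nonneg hβ (hω z₁), mul_nonneg hβ (hω z₂)]
  exact (div_le_iff₀ hden).1 (le_ciSup hbdd (z₁, z₂))

theorem integral_sub_integral_le_wspanb_mul {k : ℕ} {μ ν : Measure (Fin k → ℝ)}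
    [IsProbabilityMeasure μ] [IsProbabilityMeasure ν] {β C : ℝ} {ω φ : (Fin k → ℝ) → ℝ}
    (hβ : 0 < β) (hω : ∀ x, 0 ≤ ω x) (hC : 0 ≤ C) (hφ : ∀ x, |φ x| ≤ C * (1 + ω x))
    (hμ : Integrable φ μ) (hν : Integrable φ ν)
    (hvar : Integrable (fun z => 1 + β * ω z)
      (μ.toSignedMeasure - ν.toSignedMeasure).totalVariation) :
    ∫ z, φ z ∂μ - ∫ z, φ z ∂ν ≤
      wspanb β ω φ *
        ∫ z, (1 + β * ω z) ∂(μ.toSignedMeasure - ν.toSignedMeasure).totalVariation := by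
  have hspan := sub_le_wspanb_mul hβ.le hω (bddAbove_range_weighted_span_quotient hβ hω hC hφ)
  obtain ⟨c, hc⟩ := exists_abs_sub_le_of_sub_le_add (φ := φ)
    (σ := fun z => wspanb β ω φ * (1 + β * ω z)) fun z₁ z₂ => by linarith [hspan z₁ z₂]
  rw [← integral_const_mul]
  exact integral_sub_integral_le_integral_totalVariation hc hμ hν (hvar.const_mul _)

end WeightedSpan

section ExponentialMoments

variable {α : Type*} [MeasurableSpace α] {μ : Measure α}

theorem integrable_exp_of_le_linear {ψ u v : α → ℝ} {c₁ c₂ c : ℝ} (hψ : AEMeasurable ψ μ)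
    (hu : ∀ t, Integrable (fun a => exp (t * u a)) μ)
    (hv : ∀ t, Integrable (fun a => exp (t * v a)) μ)
    (hle : ∀ a, ψ a ≤ c₁ * u a + c₂ * v a + c) :
    Integrable (fun a => exp (ψ a)) μ := by
  refine ((((hu (2 * c₁)).add (hv (2 * c₂))).const_mul (exp c / 2))).mono'
    hψ.exp.aestronglyMeasurable (.of_forall fun a => ?_)
  have hsq : ∀ t, exp (2 * t) = exp t ^ 2 := fun t => by rw [sq, ← exp_add, two_mul]
  rw [norm_of_nonneg (exp_pos _).le]
  -- AM-GM: `e^{s} e^{t} ≤ (e^{2s} + e^{2t}) / 2`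
  calc exp (ψ a) ≤ exp (c₁ * u a + c₂ * v a + c) := exp_le_exp.2 (hle a)
    _ = exp c * (exp (c₁ * u a) * exp (c₂ * v a)) := by rw [exp_add, exp_add]; ring
    _ ≤ exp c * ((exp (c₁ * u a) ^ 2 + exp (c₂ * v a) ^ 2) / 2) := by
      gcongr
      nlinarith [sq_nonneg (exp (c₁ * u a) - exp (c₂ * v a))]
    _ = exp c / 2 * (exp (2 * c₁ * u a) + exp (2 * c₂ * v a)) := by
      rw [mul_assoc 2 c₁, mul_assoc 2 c₂, hsq, hsq]; ring

theorem bddBelow_image_log_integral_exp [NeZero μ] {ι : Type*} {s : Set ι} {ψ : ι → α → ℝ}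
    {ℓ : α → ℝ} (hℓ : Integrable (fun a => exp (ℓ a)) μ)
    (hψ : ∀ i ∈ s, Integrable (fun a => exp (ψ i a)) μ) (hle : ∀ i ∈ s, ∀ a, ℓ a ≤ ψ i a) :
    BddBelow ((fun i => log (∫ a, exp (ψ i a) ∂μ)) '' s) := by
  refine ⟨log (∫ a, exp (ℓ a) ∂μ), ?_⟩
  rintro _ ⟨i, hi, rfl⟩
  exact log_le_log (integral_exp_pos hℓ)
    (integral_mono hℓ (hψ i hi) fun a => exp_le_exp.2 (hle i hi a))

end ExponentialMoments

section BellmanExponent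

variable {X H W : Type*} {γ b₁ b₂ C : ℝ} {F : X → H → W → ℝ} {G : X → W → X} {ω φ : X → ℝ}
  {a₁ a₂ : W → ℝ}

theorem abs_mul_add_comp_le (hGd : ∀ x w, ω (G x w) ≤ a₁ w + b₁ * ω x)
    (hFd : ∀ x h w, |F x h w| ≤ a₂ w + b₂ * ω x) (hC : 0 ≤ C)
    (hφ : ∀ z, |φ z| ≤ C * (1 + ω z)) (x : X) (h : H) (w : W) :
    |γ * F x h w + φ (G x w)| ≤
      |γ| * a₂ w + C * a₁ w + (|γ| * b₂ * ω x + C * (1 + b₁ * ω x)) :=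
  calc |γ * F x h w + φ (G x w)| ≤ |γ| * |F x h w| + |φ (G x w)| := by
        rw [← abs_mul]; exact abs_add_le _ _
    _ ≤ |γ| * (a₂ w + b₂ * ω x) + C * (1 + (a₁ w + b₁ * ω x)) := by
        gcongr
        · exact hFd x h w
        · exact (hφ _).trans (by gcongr; exact hGd x w)
    _ = _ := by ring

variable {Ω : Type*} [MeasurableSpace Ω] [MeasurableSpace X] [MeasurableSpace H]
  [MeasurableSpace W] {μ : Measure Ω} {W₀ : Ω → W}

theorem integrable_exp_mul_add_comp (hW₀ : Measurable W₀)
    (hGmeas : Measurable (Function.uncurry G))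
    (hFmeas : Measurable fun p : (X × H) × W => F p.1.1 p.1.2 p.2) (hφm : Measurable φ)
    (hGd : ∀ x w, ω (G x w) ≤ a₁ w + b₁ * ω x) (hFd : ∀ x h w, |F x h w| ≤ a₂ w + b₂ * ω x)
    (hmom₁ : ∀ t, Integrable (fun ω' => exp (t * a₁ (W₀ ω'))) μ)
    (hmom₂ : ∀ t, Integrable (fun ω' => exp (t * a₂ (W₀ ω'))) μ)
    (hC : 0 ≤ C) (hφ : ∀ z, |φ z| ≤ C * (1 + ω z)) (x : X) (h : H) :
    Integrable (fun ω' => exp (γ * F x h (W₀ ω') + φ (G x (W₀ ω')))) μ := by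
  have hF : Measurable fun ω' => F x h (W₀ ω') :=
    hFmeas.comp ((measurable_const (a := (x, h))).prodMk hW₀)
  have hG : Measurable fun ω' => G x (W₀ ω') := hGmeas.comp (measurable_const.prodMk hW₀)
  exact integrable_exp_of_le_linear ((hF.const_mul γ).add (hφm.comp hG)).aemeasurable hmom₂ hmom₁
    fun ω' => (le_abs_self _).trans (abs_mul_add_comp_le hGd hFd hC hφ x h (W₀ ω'))

end BellmanExponent

section BellmanOperator

variable {Ω : Type*} [MeasureSpace Ω] [IsProbabilityMeasure (ℙ : Measure Ω)] {k m d : ℕ}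
  {γ b₁ b₂ : ℝ} {U : Set (Fin m → ℝ)} {W₀ : Ω → Fin d → ℝ}
  {G : (Fin k → ℝ) → (Fin d → ℝ) → Fin k → ℝ}
  {F : (Fin k → ℝ) → (Fin m → ℝ) → (Fin d → ℝ) → ℝ} {ω : (Fin k → ℝ) → ℝ}
  {a₁ a₂ : (Fin d → ℝ) → ℝ}

theorem bellmanT_le_log_integral_exp (hW₀ : Measurable W₀)
    (hGmeas : Measurable (Function.uncurry G))
    (hFmeas : Measurable fun p : ((Fin k → ℝ) × (Fin m → ℝ)) × (Fin d → ℝ) =>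
      F p.1.1 p.1.2 p.2)
    (hGd : ∀ x w, ω (G x w) ≤ a₁ w + b₁ * ω x) (hFd : ∀ x h w, |F x h w| ≤ a₂ w + b₂ * ω x)
    (hmom₁ : ∀ t, Integrable (fun ω' => exp (t * a₁ (W₀ ω'))))
    (hmom₂ : ∀ t, Integrable (fun ω' => exp (t * a₂ (W₀ ω'))))
    {φ : (Fin k → ℝ) → ℝ} (hφm : Measurable φ) {C : ℝ} (hC : 0 ≤ C)
    (hφ : ∀ z, |φ z| ≤ C * (1 + ω z)) (x : Fin k → ℝ) {h : Fin m → ℝ} (hU : h ∈ U) :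
    bellmanT γ U W₀ G F φ x ≤ log (∫ ω', exp (γ * F x h (W₀ ω') + φ (G x (W₀ ω')))) := by
  -- `sInf` of a set that is not bounded below is `0`, so a lower bound uniform in `h` is needed.
  set K := |γ| * b₂ * ω x + C * (1 + b₁ * ω x)
  have hmeas : AEMeasurable fun ω' => -(|γ| * a₂ (W₀ ω') + C * a₁ (W₀ ω') + K) :=
    (((aemeasurable_of_aemeasurable_exp_mul one_ne_zero (hmom₂ 1).aemeasurable).const_mul _).add
      ((aemeasurable_of_aemeasurable_exp_mul one_ne_zero (hmom₁ 1).aemeasurable).const_mul _)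
      |>.add_const _).neg
  have hℓ := integrable_exp_of_le_linear (c₁ := -|γ|) (c₂ := -C) (c := -K) hmeas hmom₂ hmom₁
    fun _ => le_of_eq (by ring)
  exact csInf_le (bddBelow_image_log_integral_exp hℓ
    (fun h _ => integrable_exp_mul_add_comp hW₀ hGmeas hFmeas hφm hGd hFd hmom₁ hmom₂ hC hφ x h)
    fun h _ ω' => neg_le_of_abs_le (abs_mul_add_comp_le hGd hFd hC hφ x h (W₀ ω')))
    ⟨h, hU, rfl⟩

theorem bellmanT_sub_bellmanT_le_integral (hW₀ : Measurable W₀)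
    (hGmeas : Measurable (Function.uncurry G))
    (hFmeas : Measurable fun p : ((Fin k → ℝ) × (Fin m → ℝ)) × (Fin d → ℝ) =>
      F p.1.1 p.1.2 p.2)
    (hGd : ∀ x w, ω (G x w) ≤ a₁ w + b₁ * ω x) (hFd : ∀ x h w, |F x h w| ≤ a₂ w + b₂ * ω x)
    (hmom₁ : ∀ t, Integrable (fun ω' => exp (t * a₁ (W₀ ω'))))
    (hmom₂ : ∀ t, Integrable (fun ω' => exp (t * a₂ (W₀ ω'))))
    {f g : (Fin k → ℝ) → ℝ} (hfm : Measurable f) (hgm : Measurable g) {Cf Cg : ℝ}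
    (hCf0 : 0 ≤ Cf) (hCf : ∀ z, |f z| ≤ Cf * (1 + ω z))
    (hCg0 : 0 ≤ Cg) (hCg : ∀ z, |g z| ≤ Cg * (1 + ω z))
    {x : Fin k → ℝ} {h : Fin m → ℝ} (hU : h ∈ U)
    (hmin : log (∫ ω', exp (γ * F x h (W₀ ω') + g (G x (W₀ ω')))) =
      bellmanT γ U W₀ G F g x)
    {Q : Measure (Fin k → ℝ)} [IsFiniteMeasure Q]
    (hQ : ∀ A : Set (Fin k → ℝ), MeasurableSet A → (Q A).toReal =
      (∫ ω', A.indicator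
          (fun _ => exp (γ * F x h (W₀ ω') + f (G x (W₀ ω')))) (G x (W₀ ω'))) /
        ∫ ω', exp (γ * F x h (W₀ ω') + f (G x (W₀ ω'))))
    (hI : Integrable (fun z => f z - g z) Q) :
    bellmanT γ U W₀ G F f x - bellmanT γ U W₀ G F g x ≤ ∫ z, (f z - g z) ∂Q := by
  have hT : Measurable fun ω' => G x (W₀ ω') := hGmeas.comp (measurable_const.prodMk hW₀)
  have hrep := eq_map_tilted_of_toReal_apply hT _ hQ
  have hTf := bellmanT_le_log_integral_exp (γ := γ) hW₀ hGmeas hFmeas hGd hFd hmom₁ hmom₂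
    hfm hCf0 hCf x hU
  have hχ : Integrable (fun ω' => g (G x (W₀ ω')) - f (G x (W₀ ω')))
      (Measure.tilted ℙ fun ω' => γ * F x h (W₀ ω') + f (G x (W₀ ω'))) := by
    rw [hrep] at hI
    exact (hI.comp_measurable hT).neg.congr (.of_forall fun _ => by simp)
  have hgibbs := integral_tilted_le_log_integral_exp_add_sub
    (integrable_exp_mul_add_comp hW₀ hGmeas hFmeas hfm hGd hFd hmom₁ hmom₂ hCf0 hCf x h)
    (by simpa only [add_add_sub_cancel] using
      integrable_exp_mul_add_comp hW₀ hGmeas hFmeas hgm hGd hFd hmom₁ hmom₂ hCg0 hCg x h) hχ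
  simp only [add_add_sub_cancel] at hgibbs
  have hmean : ∫ z, (f z - g z) ∂Q = -∫ ω', (g (G x (W₀ ω')) - f (G x (W₀ ω')))
      ∂(Measure.tilted ℙ fun ω' => γ * F x h (W₀ ω') + f (G x (W₀ ω'))) := by
    rw [hrep, integral_map (f := fun z => f z - g z) hT.aemeasurable
      (hfm.sub hgm).aestronglyMeasurable, ← integral_neg]
    simp only [neg_sub]
  linarith

end BellmanOperator

theorem stmt15_general {Ω : Type*} [MeasureSpace Ω] [IsProbabilityMeasure (ℙ : Measure Ω)]
    (k m d : ℕ) (γ : ℝ)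
    (U : Set (Fin m → ℝ))
    (W₀ : Ω → Fin d → ℝ) (hW₀ : Measurable W₀)
    (G : (Fin k → ℝ) → (Fin d → ℝ) → Fin k → ℝ)
    (hGmeas : Measurable (Function.uncurry G))
    (F : (Fin k → ℝ) → (Fin m → ℝ) → (Fin d → ℝ) → ℝ)
    (hFmeas : Measurable fun p : ((Fin k → ℝ) × (Fin m → ℝ)) × (Fin d → ℝ) =>
      F p.1.1 p.1.2 p.2)
    (ω : (Fin k → ℝ) → ℝ) (hω0 : ∀ x, 0 ≤ ω x)
    (a₁ a₂ : (Fin d → ℝ) → ℝ)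
    (b₁ b₂ : ℝ)
    (hGd : ∀ x w, ω (G x w) ≤ a₁ w + b₁ * ω x)
    (hFd : ∀ x h w, |F x h w| ≤ a₂ w + b₂ * ω x)
    (hmom : ∀ c : ℝ,
      Integrable (fun ω' => Real.exp (c * a₁ (W₀ ω'))) ∧
        Integrable (fun ω' => Real.exp (c * a₂ (W₀ ω'))))
    (f g : (Fin k → ℝ) → ℝ) (hfc : Continuous f) (hgc : Continuous g)
    (hfb : BddAbove (Set.range fun x => |f x| / (1 + ω x)))
    (hgb : BddAbove (Set.range fun x => |g x| / (1 + ω x)))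
    (x y : Fin k → ℝ) (β : ℝ) (hβ : 0 < β)
    -- h_{(x,g)} and h_{(y,f)}: minimizers in the Bellman operator
    (hxg hyf : Fin m → ℝ) (hxgU : hxg ∈ U) (hyfU : hyf ∈ U)
    (hmin1 : Real.log (∫ ω', Real.exp (γ * F x hxg (W₀ ω') + g (G x (W₀ ω')))) =
      bellmanT γ U W₀ G F g x)
    (hmin2 : Real.log (∫ ω', Real.exp (γ * F y hyf (W₀ ω') + f (G y (W₀ ω')))) =
      bellmanT γ U W₀ G F f y)
    -- the Esscher-transformed transition measures Q̄_{(x,f,h_{(x,g)})}, Q̄_{(y,g,h_{(y,f)})}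
    (Q₁ Q₂ : Measure (Fin k → ℝ))
    [IsProbabilityMeasure Q₁] [IsProbabilityMeasure Q₂]
    (hQ₁ : ∀ A : Set (Fin k → ℝ), MeasurableSet A → (Q₁ A).toReal =
      (∫ ω', A.indicator
          (fun _ => Real.exp (γ * F x hxg (W₀ ω') + f (G x (W₀ ω')))) (G x (W₀ ω'))) /
        ∫ ω', Real.exp (γ * F x hxg (W₀ ω') + f (G x (W₀ ω'))))
    (hQ₂ : ∀ A : Set (Fin k → ℝ), MeasurableSet A → (Q₂ A).toReal =
      (∫ ω', A.indicator
          (fun _ => Real.exp (γ * F y hyf (W₀ ω') + g (G y (W₀ ω')))) (G y (W₀ ω'))) /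
        ∫ ω', Real.exp (γ * F y hyf (W₀ ω') + g (G y (W₀ ω'))))
    (hI₁ : Integrable (fun z => f z - g z) Q₁)
    (hI₂ : Integrable (fun z => f z - g z) Q₂)
    (hIvar : Integrable (fun z => 1 + β * ω z)
      ((Q₁.toSignedMeasure - Q₂.toSignedMeasure).totalVariation)) :
    bellmanT γ U W₀ G F f x - bellmanT γ U W₀ G F g x -
        (bellmanT γ U W₀ G F f y - bellmanT γ U W₀ G F g y) ≤
      (∫ z, (f z - g z) ∂Q₁) - ∫ z, (f z - g z) ∂Q₂ ∧
    (∫ z, (f z - g z) ∂Q₁) - (∫ z, (f z - g z) ∂Q₂) ≤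
      wspanb β ω (fun z => f z - g z) *
        ∫ z, (1 + β * ω z) ∂((Q₁.toSignedMeasure - Q₂.toSignedMeasure).totalVariation) := by
  obtain ⟨Cf, hCf0, hCf⟩ := exists_nonneg_abs_le_mul_one_add hω0 hfb
  obtain ⟨Cg, hCg0, hCg⟩ := exists_nonneg_abs_le_mul_one_add hω0 hgb
  have hmom₁ := fun t => (hmom t).1
  have hmom₂ := fun t => (hmom t).2
  have hx := bellmanT_sub_bellmanT_le_integral hW₀ hGmeas hFmeas hGd hFd hmom₁ hmom₂
    hfc.measurable hgc.measurable hCf0 hCf hCg0 hCg hxgU hmin1 hQ₁ hI₁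
  have hy := bellmanT_sub_bellmanT_le_integral hW₀ hGmeas hFmeas hGd hFd hmom₁ hmom₂
    hgc.measurable hfc.measurable hCg0 hCg hCf0 hCf hyfU hmin2 hQ₂
    (by simpa only [neg_sub] using hI₂.fun_neg)
  have hswap : ∫ z, (g z - f z) ∂Q₂ = -∫ z, (f z - g z) ∂Q₂ := by
    rw [← integral_neg]; simp only [neg_sub]
  refine ⟨by linarith, integral_sub_integral_le_wspanb_mul hβ hω0 (add_nonneg hCf0 hCg0)
    (fun z => ?_) hI₁ hI₂ hIvar⟩
  calc |f z - g z| ≤ |f z| + |g z| := abs_sub _ _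
    _ ≤ (Cf + Cg) * (1 + ω z) := by linarith [hCf z, hCg z]

theorem stmt15 {Ω : Type*} [MeasureSpace Ω] [IsProbabilityMeasure (ℙ : Measure Ω)]
    (k m d : ℕ) (γ : ℝ) (hγ : γ < 0)
    (U : Set (Fin m → ℝ)) (hU : IsCompact U) (hUne : U.Nonempty)
    (W₀ : Ω → Fin d → ℝ) (hW₀ : Measurable W₀)
    (G : (Fin k → ℝ) → (Fin d → ℝ) → Fin k → ℝ)
    (hGmeas : Measurable (Function.uncurry G))
    (hGcont : ∀ w, Continuous fun x => G x w)
    (F : (Fin k → ℝ) → (Fin m → ℝ) → (Fin d → ℝ) → ℝ)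
    (hFmeas : Measurable fun p : ((Fin k → ℝ) × (Fin m → ℝ)) × (Fin d → ℝ) =>
      F p.1.1 p.1.2 p.2)
    (hFcont : ∀ w, Continuous fun p : (Fin k → ℝ) × (Fin m → ℝ) => F p.1 p.2 w)
    (ω : (Fin k → ℝ) → ℝ) (hωc : Continuous ω) (hω0 : ∀ x, 0 ≤ ω x)
    (a₁ a₂ : (Fin d → ℝ) → ℝ) (ha₁ : ∀ w, 0 ≤ a₁ w) (ha₂ : ∀ w, 0 ≤ a₂ w)
    (b₁ b₂ : ℝ) (hb₁ : 0 < b₁) (hb₁' : b₁ < 1) (hb₂ : 0 < b₂)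
    (hGd : ∀ x w, ω (G x w) ≤ a₁ w + b₁ * ω x)
    (hFd : ∀ x h w, |F x h w| ≤ a₂ w + b₂ * ω x)
    (hmom : ∀ c : ℝ,
      Integrable (fun ω' => Real.exp (c * a₁ (W₀ ω'))) ∧
        Integrable (fun ω' => Real.exp (c * a₂ (W₀ ω'))))
    (f g : (Fin k → ℝ) → ℝ) (hfc : Continuous f) (hgc : Continuous g)
    (hfb : BddAbove (Set.range fun x => |f x| / (1 + ω x)))
    (hgb : BddAbove (Set.range fun x => |g x| / (1 + ω x)))
    (x y : Fin k → ℝ) (β : ℝ) (hβ : 0 < β)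
    -- h_{(x,g)} and h_{(y,f)}: minimizers in the Bellman operator
    (hxg hyf : Fin m → ℝ) (hxgU : hxg ∈ U) (hyfU : hyf ∈ U)
    (hmin1 : Real.log (∫ ω', Real.exp (γ * F x hxg (W₀ ω') + g (G x (W₀ ω')))) =
      bellmanT γ U W₀ G F g x)
    (hmin2 : Real.log (∫ ω', Real.exp (γ * F y hyf (W₀ ω') + f (G y (W₀ ω')))) =
      bellmanT γ U W₀ G F f y)
    -- the Esscher-transformed transition measures Q̄_{(x,f,h_{(x,g)})}, Q̄_{(y,g,h_{(y,f)})}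
    (Q₁ Q₂ : Measure (Fin k → ℝ))
    [IsProbabilityMeasure Q₁] [IsProbabilityMeasure Q₂]
    (hQ₁ : ∀ A : Set (Fin k → ℝ), MeasurableSet A → (Q₁ A).toReal =
      (∫ ω', A.indicator
          (fun _ => Real.exp (γ * F x hxg (W₀ ω') + f (G x (W₀ ω')))) (G x (W₀ ω'))) /
        ∫ ω', Real.exp (γ * F x hxg (W₀ ω') + f (G x (W₀ ω'))))
    (hQ₂ : ∀ A : Set (Fin k → ℝ), MeasurableSet A → (Q₂ A).toReal =
      (∫ ω', A.indicator
          (fun _ => Real.exp (γ * F y hyf (W₀ ω') + g (G y (W₀ ω')))) (G y (W₀ ω'))) /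
        ∫ ω', Real.exp (γ * F y hyf (W₀ ω') + g (G y (W₀ ω'))))
    (hI₁ : Integrable (fun z => f z - g z) Q₁)
    (hI₂ : Integrable (fun z => f z - g z) Q₂)
    (hIvar : Integrable (fun z => 1 + β * ω z)
      ((Q₁.toSignedMeasure - Q₂.toSignedMeasure).totalVariation)) :
    bellmanT γ U W₀ G F f x - bellmanT γ U W₀ G F g x -
        (bellmanT γ U W₀ G F f y - bellmanT γ U W₀ G F g y) ≤
      (∫ z, (f z - g z) ∂Q₁) - ∫ z, (f z - g z) ∂Q₂ ∧
    (∫ z, (f z - g z) ∂Q₁) - (∫ z, (f z - g z) ∂Q₂) ≤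
      wspanb β ω (fun z => f z - g z) *
        ∫ z, (1 + β * ω z) ∂((Q₁.toSignedMeasure - Q₂.toSignedMeasure).totalVariation) :=
  stmt15_general k m d γ U W₀ hW₀ G hGmeas F hFmeas ω hω0 a₁ a₂ b₁ b₂ hGd hFd hmom f g hfc hgc hfb
    hgb x y β hβ hxg hyf hxgU hyfU hmin1 hmin2 Q₁ Q₂ hQ₁ hQ₂ hI₁ hI₂ hIvar
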